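/- Let M ∈ ℝ^{J×L}, Y ∈ ℝ^J, and consider the iterative soft-thresholding iteration A^{j+1} = S_{sα}(A^j − s Mᵗ(M A^j − Y)) with constant step s = 1/‖M‖², where ‖M‖ is the spectral norm. Then each iterate A^{j+1} is the unique minimizer of the surrogate functional A ↦ (1/2)‖MA − Y‖² + α‖A‖₁ + (1/(2s))‖A − A^j‖² − (1/2)‖M(A − A^j)‖², and the objective Φ(A) = (1/2)‖MA − Y‖² + α‖A‖₁ is non-increasing along the iterates: Φ(A^{j+1}) ≤ Φ(A^j). -/

import Mathlib

/-! Majorization–minimization: the surrogate differs from `Φ` by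
`(1/(2s))‖A − Aʲ‖² − (1/2)‖M(A − Aʲ)‖²`, which vanishes at `Aʲ` and is nonnegative since
`s‖M‖² ≤ 1`, so `Φ(Aʲ⁺¹) ≤ Ψ(Aʲ⁺¹) ≤ Ψ(Aʲ) = Φ(Aʲ)`. Completing the square with the adjoint turns
the surrogate into `(1/(2s))‖A − g‖² + α‖A‖₁` plus a constant. This problem separates over the
coordinates, and the three-point inequality for soft thresholding shows that `S_{sα}(g)` beats
every other `A` by at least `‖A − S_{sα}(g)‖²/(2s)`. -/

open Matrix RealInnerProductSpace
open scoped InnerProduct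

noncomputable def softThreshold (lam t : ℝ) : ℝ := max (|t| - lam) 0 * Real.sign t

theorem softThreshold_of_lt {lam t : ℝ} (h : lam < t) (hlam : 0 ≤ lam) :
    softThreshold lam t = t - lam := by
  rw [softThreshold, Real.sign_of_pos (by linarith), abs_of_pos (by linarith),
    max_eq_left (by linarith), mul_one]

theorem softThreshold_of_lt_neg {lam t : ℝ} (h : t < -lam) (hlam : 0 ≤ lam) :
    softThreshold lam t = t + lam := by
  rw [softThreshold, Real.sign_of_neg (by linarith), abs_of_neg (by linarith),
    max_eq_left (by linarith)]
  ring

theorem softThreshold_of_abs_le {lam t : ℝ} (h : |t| ≤ lam) : softThreshold lam t = 0 := by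
  rw [softThreshold, max_eq_right (by linarith), zero_mul]

theorem softThreshold_three_point {lam : ℝ} (hlam : 0 ≤ lam) (g x : ℝ) :
    (softThreshold lam g - g) ^ 2 + 2 * lam * |softThreshold lam g|
        + (x - softThreshold lam g) ^ 2 ≤ (x - g) ^ 2 + 2 * lam * |x| := by
  rcases lt_or_ge lam g with hg | hg
  · rw [softThreshold_of_lt hg hlam, abs_of_pos (by linarith)]
    nlinarith [mul_le_mul_of_nonneg_left (le_abs_self x) hlam]
  rcases lt_or_ge g (-lam) with hg' | hg'
  · rw [softThreshold_of_lt_neg hg' hlam, abs_of_neg (by linarith)]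
    nlinarith [mul_le_mul_of_nonneg_left (neg_abs_le x) hlam]
  · have hgl : |g| ≤ lam := abs_le.2 ⟨hg', hg⟩
    rw [softThreshold_of_abs_le hgl, abs_zero]
    nlinarith [abs_mul x g, le_abs_self (x * g), mul_le_mul_of_nonneg_left hgl (abs_nonneg x)]

theorem EuclideanSpace.softThreshold_three_point {ι : Type*} [Fintype ι] {lam : ℝ}
    (hlam : 0 ≤ lam) (g x p : EuclideanSpace ℝ ι) (hp : ∀ i, p i = softThreshold lam (g i)) :
    ‖p - g‖ ^ 2 + 2 * lam * ∑ i, |p i| + ‖x - p‖ ^ 2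
      ≤ ‖x - g‖ ^ 2 + 2 * lam * ∑ i, |x i| := by
  simp only [EuclideanSpace.real_norm_sq_eq, PiLp.sub_apply, Finset.mul_sum,
    ← Finset.sum_add_distrib]
  refine Finset.sum_le_sum fun i _ => ?_
  rw [hp]
  exact _root_.softThreshold_three_point hlam (g i) (x i)

theorem EuclideanSpace.softThreshold_prox_gap {ι : Type*} [Fintype ι] {s α : ℝ} (hs : 0 < s)
    (hα : 0 ≤ α) (g x p : EuclideanSpace ℝ ι)
    (hp : ∀ i, p i = softThreshold (s * α) (g i)) :
    (1 / (2 * s)) * ‖p - g‖ ^ 2 + α * ∑ i, |p i| + (1 / (2 * s)) * ‖x - p‖ ^ 2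
      ≤ (1 / (2 * s)) * ‖x - g‖ ^ 2 + α * ∑ i, |x i| := by
  have h := mul_le_mul_of_nonneg_left
    (softThreshold_three_point (mul_nonneg hs.le hα) g x p hp) (by positivity : 0 ≤ 1 / (2 * s))
  have hcoef : 1 / (2 * s) * (2 * (s * α)) = α := by field_simp
  linear_combination h + (∑ i, |x i| - ∑ i, |p i|) * hcoef

section LeastSquares

variable {E F : Type*} [NormedAddCommGroup E] [InnerProductSpace ℝ E]
  [NormedAddCommGroup F] [InnerProductSpace ℝ F]

theorem half_norm_apply_sq_le (T : E →L[ℝ] F) {s : ℝ} (hs : 0 < s) (hsT : s * ‖T‖ ^ 2 ≤ 1)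
    (d : E) : (1 / 2) * ‖T d‖ ^ 2 ≤ (1 / (2 * s)) * ‖d‖ ^ 2 := by
  have hTd : ‖T d‖ ^ 2 ≤ ‖T‖ ^ 2 * ‖d‖ ^ 2 := by
    rw [← mul_pow]; gcongr; exact T.le_opNorm d
  have hd : ‖T‖ ^ 2 * ‖d‖ ^ 2 ≤ ‖d‖ ^ 2 / s := by
    rw [le_div_iff₀ hs]; nlinarith [sq_nonneg ‖d‖]
  calc (1 / 2) * ‖T d‖ ^ 2 ≤ (1 / 2) * (‖d‖ ^ 2 / s) := by gcongr; exact hTd.trans hd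
    _ = (1 / (2 * s)) * ‖d‖ ^ 2 := by field_simp

theorem leastSquares_surrogate_eq [CompleteSpace E] [CompleteSpace F] (T : E →L[ℝ] F) (y : F)
    {s : ℝ} (hs : s ≠ 0) (a x : E) :
    (1 / 2) * ‖T x - y‖ ^ 2 + (1 / (2 * s)) * ‖x - a‖ ^ 2 - (1 / 2) * ‖T (x - a)‖ ^ 2
      = (1 / (2 * s)) * ‖x - (a - s • (T†) (T a - y))‖ ^ 2
        + ((1 / 2) * ‖T a - y‖ ^ 2 - (s / 2) * ‖(T†) (T a - y)‖ ^ 2) := by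
  set r := (T†) (T a - y)
  have hres : ‖T x - y‖ ^ 2 = ‖T (x - a)‖ ^ 2 + 2 * ⟪x - a, r⟫ + ‖T a - y‖ ^ 2 := by
    rw [ContinuousLinearMap.adjoint_inner_right, ← norm_add_sq_real, map_sub, sub_add_sub_cancel]
  have hprox : ‖x - (a - s • r)‖ ^ 2 = ‖x - a‖ ^ 2 + 2 * s * ⟪x - a, r⟫ + s ^ 2 * ‖r‖ ^ 2 := by
    rw [sub_sub_eq_add_sub, add_sub_right_comm, norm_add_sq_real, inner_smul_right, norm_smul,
      mul_pow, Real.norm_eq_abs, sq_abs]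
    ring
  rw [hres, hprox]
  field_simp
  ring

end LeastSquares

theorem Matrix.adjoint_toContinuousLinearMap_toEuclideanLin {m n : Type*} [Fintype m]
    [Fintype n] [DecidableEq m] [DecidableEq n] (M : Matrix m n ℝ) :
    (LinearMap.toContinuousLinearMap (toEuclideanLin M))† =
      LinearMap.toContinuousLinearMap (toEuclideanLin Mᵀ) := by
  rw [← LinearMap.adjoint_toContinuousLinearMap, ← toEuclideanLin_conjTranspose_eq_adjoint,
    conjTranspose_eq_transpose_of_trivial]

/-- Iterative soft thresholding with constant step `s = 1/‖M‖²` (spectral norm):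
`A^{j+1} = S_{sα}(A^j − s Mᵗ(M A^j − Y))` is the unique minimizer of the surrogate
functional `A ↦ Φ(A) + (1/(2s))‖A − A^j‖² − (1/2)‖M(A − A^j)‖²`, where
`Φ(A) = (1/2)‖MA − Y‖² + α‖A‖₁`, and `Φ` is non-increasing along the iterates:
`Φ(A^{j+1}) ≤ Φ(A^j)`. -/
theorem IST_majorization_minimization
    {J L : ℕ}
    (M : Matrix (Fin J) (Fin L) ℝ) (hM : M ≠ 0)
    (Y : EuclideanSpace ℝ (Fin J))
    (α : ℝ) (hα : 0 < α)
    (s : ℝ)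
    -- constant step s = 1/‖M‖², ‖M‖ the spectral norm (Euclidean operator norm)
    (hs : s = 1 / ‖LinearMap.toContinuousLinearMap (Matrix.toEuclideanLin M)‖ ^ 2)
    -- componentwise soft thresholding
    (Slam : ℝ → ℝ → ℝ)
    (hSlam : ∀ lam t, Slam lam t = max (|t| - lam) 0 * Real.sign t)
    (Aj g Anext : EuclideanSpace ℝ (Fin L))
    -- the proxy g = A^j − s Mᵗ(M A^j − Y)
    (hg : g = Aj - s • (Matrix.toEuclideanLin Mᵀ) ((Matrix.toEuclideanLin M) Aj - Y))
    -- the iterate A^{j+1} = S_{sα}(g)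
    (hAnext : ∀ l, Anext l = Slam (s * α) (g l))
    (Φ Ψs : EuclideanSpace ℝ (Fin L) → ℝ)
    -- the objective Φ(A) = (1/2)‖MA − Y‖² + α‖A‖₁
    (hΦ : ∀ A, Φ A = (1 / 2) * ‖(Matrix.toEuclideanLin M) A - Y‖ ^ 2 + α * ∑ l, |A l|)
    -- the surrogate functional
    (hΨ : ∀ A, Ψs A = Φ A + (1 / (2 * s)) * ‖A - Aj‖ ^ 2
        - (1 / 2) * ‖(Matrix.toEuclideanLin M) (A - Aj)‖ ^ 2) :
    -- A^{j+1} is the unique minimizer of the surrogate, and Φ is non-increasing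
    (∀ A : EuclideanSpace ℝ (Fin L), A ≠ Anext → Ψs Anext < Ψs A) ∧
    Φ Anext ≤ Φ Aj := by
  set T := LinearMap.toContinuousLinearMap (toEuclideanLin M)
  have hΦT : ∀ A, Φ A = (1 / 2) * ‖T A - Y‖ ^ 2 + α * ∑ l, |A l| := hΦ
  have hΨT : ∀ A, Ψs A = Φ A + (1 / (2 * s)) * ‖A - Aj‖ ^ 2 - (1 / 2) * ‖T (A - Aj)‖ ^ 2 := hΨ
  have hT : 0 < ‖T‖ := norm_pos_iff.2 (by simpa [T] using hM)
  have hs0 : 0 < s := by rw [hs]; positivity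
  have hsT : s * ‖T‖ ^ 2 = 1 := by rw [hs]; field_simp
  have hg' : g = Aj - s • (T†) (T Aj - Y) := by
    rw [hg, adjoint_toContinuousLinearMap_toEuclideanLin]; rfl
  have hΨ' : ∀ A, Ψs A = (1 / (2 * s)) * ‖A - g‖ ^ 2 + α * ∑ l, |A l|
      + ((1 / 2) * ‖T Aj - Y‖ ^ 2 - (s / 2) * ‖(T†) (T Aj - Y)‖ ^ 2) := by
    intro A
    have := leastSquares_surrogate_eq T Y hs0.ne' Aj A
    rw [← hg'] at this
    rw [hΨT, hΦT]
    linarith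
  have hgap : ∀ A, Ψs Anext + (1 / (2 * s)) * ‖A - Anext‖ ^ 2 ≤ Ψs A := by
    intro A
    rw [hΨ', hΨ']
    linarith [EuclideanSpace.softThreshold_prox_gap hs0 hα.le g A Anext
      fun l => (hAnext l).trans (hSlam _ _)]
  refine ⟨fun A hA => ?_, ?_⟩
  · have : 0 < (1 / (2 * s)) * ‖A - Anext‖ ^ 2 := by
      have := norm_pos_iff.2 (sub_ne_zero.2 hA)
      positivity
    linarith [hgap A]
  · calc Φ Anext ≤ Ψs Anext := by
          rw [hΨT]
          linarith [half_norm_apply_sq_le T hs0 hsT.le (Anext - Aj)]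
      _ ≤ Ψs Aj := by
          have : 0 ≤ (1 / (2 * s)) * ‖Aj - Anext‖ ^ 2 := by positivity
          linarith [hgap Aj]
      _ = Φ Aj := by simp [hΨT]
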